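/- Generalized Fortuin–Kasteleyn representation: for a finite list L = (g_e)_{e∈E} in a finitely generated abelian group G, and H ≅ ⊕_{i=1}^k ℤ/q_iℤ a finite abelian group of order q = q_1···q_k, Σ_{φ∈Hom(G,H)} Π_{e∈E}(1 + v_e·[φ(g_e)=0]) = q^{rk(G)} Σ_{A⊆E} q^{-rk(A)} (Π_{i=1}^k m(A)/|q_i G_A|) Π_{e∈A} v_e. -/

import Mathlib

variable {α : Type*} [DecidableEq α] {G : Type*} [AddCommGroup G]

/-- The subgroup `⟨L_A⟩` generated by the sublist of the list `g` indexed by `A`. -/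
def listSub (g : α → G) (A : Finset α) : AddSubgroup G :=
  AddSubgroup.closure (g '' ↑A)

/-- The (free) rank `rk(A)` of `⟨L_A⟩`. -/
noncomputable def listRk (g : α → G) (A : Finset α) : ℕ :=
  Module.finrank ℤ (listSub g A)

/-- `G_A`: the torsion subgroup of `G/⟨L_A⟩`. -/
def listTorsion (g : α → G) (A : Finset α) : AddSubgroup (G ⧸ listSub g A) :=
  AddCommGroup.torsion (G ⧸ listSub g A)

/-- The multiplicity `m(A) = |G_A|`. -/
noncomputable def listMult (g : α → G) (A : Finset α) : ℕ :=
  Nat.card (listTorsion g A)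

/-- The subgroup `qH = {q·h : h ∈ H}` of an abelian group `H`. -/
def nsmulSub (q : ℕ) (H : Type*) [AddCommGroup H] : AddSubgroup H :=
  AddMonoidHom.range
    { toFun := fun h : H => q • h
      map_zero' := smul_zero q
      map_add' := fun a b => smul_add q a b }

/-
Expanding the products over subsets `A ⊆ E` and exchanging the sums, the coefficient of
`∏_{e∈A} v_e` is the number of homomorphisms `G → ⊕ ℤ/q_iℤ` killing `⟨L_A⟩`, that is the
product over `i` of `|Hom(G/⟨L_A⟩, ℤ/q_iℤ)|`. A finitely generated group is `Q ≅ ℤ^r ⊕ T` with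
`T` its (finite) torsion subgroup, so `|Hom(Q, ℤ/qℤ)| = q^r |Hom(T, ℤ/qℤ)|`, and
`|Hom(T, ℤ/qℤ)| · |qT| = |T|` reduces to the cyclic factors `T = ℤ/dℤ`, where
`|Hom(ℤ/dℤ, ℤ/qℤ)| = gcd(d, q)` and `|q(ℤ/dℤ)| = d / gcd(d, q)`. Finally
`rk(G/⟨L_A⟩) = rk(G) - rk(A)` by rank–nullity.
-/

open AddCommGroup Module

theorem nsmulSub_eq_range (q : ℕ) (M : Type*) [AddCommGroup M] :
    nsmulSub q M = (nsmulAddMonoidHom q : M →+ M).range := rfl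

theorem map_nsmulSub {M N : Type*} [AddCommGroup M] [AddCommGroup N] (q : ℕ) (e : M ≃+ N) :
    (nsmulSub q M).map (e : M →+ N) = nsmulSub q N := by
  ext y
  simp only [nsmulSub_eq_range, AddSubgroup.mem_map, AddMonoidHom.mem_range,
    nsmulAddMonoidHom_apply]
  constructor
  · rintro ⟨_, ⟨x, rfl⟩, rfl⟩
    exact ⟨e x, (map_nsmul e q x).symm⟩
  · rintro ⟨y, rfl⟩
    exact ⟨_, ⟨e.symm y, rfl⟩, by simp⟩

theorem card_nsmulSub_congr {M N : Type*} [AddCommGroup M] [AddCommGroup N] (q : ℕ)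
    (e : M ≃+ N) : Nat.card (nsmulSub q M) = Nat.card (nsmulSub q N) := by
  rw [← map_nsmulSub q e, AddSubgroup.card_map_of_injective e.injective]

theorem card_nsmulSub_pi {ι : Type*} [Fintype ι] (M : ι → Type*) [∀ i, AddCommGroup (M i)]
    (q : ℕ) : Nat.card (nsmulSub q (∀ i, M i)) = ∏ i, Nat.card (nsmulSub q (M i)) := by
  rw [← Nat.card_pi]
  refine Nat.card_congr ((Equiv.subtypeEquivRight fun x => ?_).trans Equiv.subtypePiEquivPi)
  simp only [nsmulSub_eq_range, AddMonoidHom.mem_range, nsmulAddMonoidHom_apply]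
  exact ⟨fun ⟨y, hy⟩ i => ⟨y i, by rw [← hy]; rfl⟩,
    fun h => ⟨fun i => (h i).choose, funext fun i => (h i).choose_spec⟩⟩

theorem card_ker_nsmul_mul_card_nsmulSub (q : ℕ) (M : Type*) [AddCommGroup M] :
    Nat.card (nsmulAddMonoidHom q : M →+ M).ker * Nat.card (nsmulSub q M) = Nat.card M := by
  rw [nsmulSub_eq_range, ← AddSubgroup.index_ker, AddSubgroup.card_mul_index]

theorem nsmulSub_zmod_eq_zmultiples (q d : ℕ) :
    nsmulSub q (ZMod d) = AddSubgroup.zmultiples (q : ZMod d) := by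
  ext x
  simp only [nsmulSub_eq_range, AddMonoidHom.mem_range, nsmulAddMonoidHom_apply,
    AddSubgroup.mem_zmultiples_iff]
  constructor
  · rintro ⟨y, rfl⟩
    obtain ⟨k, rfl⟩ := ZMod.intCast_surjective y
    exact ⟨k, by simp [mul_comm]⟩
  · rintro ⟨k, rfl⟩
    exact ⟨k, by simp [mul_comm]⟩

theorem card_nsmulSub_zmod (q : ℕ) {d : ℕ} (hd : d ≠ 0) :
    Nat.card (nsmulSub q (ZMod d)) = d / d.gcd q := by
  rw [nsmulSub_zmod_eq_zmultiples, Nat.card_zmultiples, ZMod.addOrderOf_coe q hd]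

theorem card_addMonoidHom_zmod (n : ℕ) (M : Type*) [AddCommGroup M] :
    Nat.card (ZMod n →+ M) = Nat.card (nsmulAddMonoidHom n : M →+ M).ker := by
  refine Nat.card_congr ((ZMod.lift n).symm.trans
    (Equiv.subtypeEquiv (zmultiplesHom M).symm fun f => ?_))
  simp [← map_nsmul]

theorem card_addMonoidHom_zmod_zmod {d q : ℕ} (hq : q ≠ 0) :
    Nat.card (ZMod d →+ ZMod q) = d.gcd q := by
  have h := card_ker_nsmul_mul_card_nsmulSub d (ZMod q)
  rw [card_nsmulSub_zmod d hq, Nat.card_zmod] at h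
  have hg : q.gcd d * (q / q.gcd d) = q := Nat.mul_div_cancel' (Nat.gcd_dvd_left q d)
  have hpos : 0 < q / q.gcd d := Nat.div_pos (Nat.gcd_le_left d (Nat.pos_of_ne_zero hq))
    (Nat.gcd_pos_of_pos_left d (Nat.pos_of_ne_zero hq))
  rw [card_addMonoidHom_zmod, Nat.gcd_comm, Nat.eq_of_mul_eq_mul_right hpos (h.trans hg.symm)]

theorem card_addMonoidHom_zmod_mul_card_nsmulSub {d q : ℕ} (hd : d ≠ 0) (hq : q ≠ 0) :
    Nat.card (ZMod d →+ ZMod q) * Nat.card (nsmulSub q (ZMod d)) = d := by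
  rw [card_addMonoidHom_zmod_zmod hq, card_nsmulSub_zmod q hd,
    Nat.mul_div_cancel' (Nat.gcd_dvd_left d q)]

theorem card_addMonoidHom_mul_card_nsmulSub_of_finite (D : Type*) [AddCommGroup D] [Finite D]
    {q : ℕ} (hq : q ≠ 0) :
    Nat.card (D →+ ZMod q) * Nat.card (nsmulSub q D) = Nat.card D := by
  classical
  obtain ⟨ι, _, p, hp, e, ⟨f⟩⟩ := equiv_directSum_zmod_of_finite D
  let f' : D ≃+ ∀ i, ZMod (p i ^ e i) := f.trans (DirectSum.addEquivProd _)
  rw [Nat.card_congr (f.addMonoidHomCongrLeftEquiv.trans DFinsupp.liftAddHom.symm.toEquiv),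
    card_nsmulSub_congr q f', card_nsmulSub_pi, Nat.card_congr f'.toEquiv, Nat.card_pi,
    Nat.card_pi, ← Finset.prod_mul_distrib]
  refine Finset.prod_congr rfl fun i _ => ?_
  rw [Nat.card_zmod,
    card_addMonoidHom_zmod_mul_card_nsmulSub (pow_ne_zero _ (hp i).ne_zero) hq]

noncomputable def torsionProdEquiv (M D : Type*) [AddCommGroup M] [AddCommGroup D]
    [IsAddTorsionFree M] (hD : IsAddTorsion D) : torsion (M × D) ≃+ D :=
  AddEquiv.ofBijective ((AddMonoidHom.snd M D).comp (torsion (M × D)).subtype) <| by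
    refine ⟨fun x y hxy => ?_, fun d => ⟨⟨(0, d), ?_⟩, rfl⟩⟩
    · have hx := (AddMonoidHom.fst M D).isOfFinAddOrder x.2
      have hy := (AddMonoidHom.fst M D).isOfFinAddOrder y.2
      rw [AddMonoidHom.coe_fst, isOfFinAddOrder_iff_eq_zero] at hx hy
      exact Subtype.ext (Prod.ext (hx.trans hy.symm) hxy)
    · exact IsOfFinAddOrder.prod_iff.mpr ⟨IsOfFinAddOrder.zero, hD d⟩

theorem finrank_prod_eq_left_of_isAddTorsion (M D : Type*) [AddCommGroup M] [AddCommGroup D]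
    [Module.Finite ℤ M] [Module.Finite ℤ D] (hD : IsAddTorsion D) :
    finrank ℤ (M × D) = finrank ℤ M := by
  have h := (LinearMap.ker (LinearMap.fst ℤ M D)).finrank_quotient_add_finrank
  rw [(LinearMap.fst ℤ M D).quotKerEquivOfSurjective LinearMap.fst_surjective |>.finrank_eq,
    LinearMap.ker_fst, ← (LinearEquiv.ofInjective _ LinearMap.inr_injective).finrank_eq,
    (isAddTorsion_iff_isTorsion_int.mp hD).finrank_eq_zero, add_zero] at h
  exact h.symm

theorem AddSubgroup.finrank_quotient_add_finrank {M : Type*} [AddCommGroup M]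
    [Module.Finite ℤ M] (N : AddSubgroup M) :
    finrank ℤ (M ⧸ N) + finrank ℤ N = finrank ℤ M :=
  N.toIntSubmodule.finrank_quotient_add_finrank

theorem card_addMonoidHom_prod (M N C : Type*) [AddCommGroup M] [AddCommGroup N]
    [AddCommGroup C] : Nat.card (M × N →+ C) = Nat.card (M →+ C) * Nat.card (N →+ C) := by
  rw [← Nat.card_prod]
  exact Nat.card_congr
    { toFun φ := (φ.comp (.inl M N), φ.comp (.inr M N))
      invFun ψ := ψ.1.coprod ψ.2
      left_inv φ := by ext; simp
      right_inv ψ := by ext <;> simp }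

theorem card_addMonoidHom_finsupp_int (ι C : Type*) [Finite ι] [AddCommGroup C] :
    Nat.card ((ι →₀ ℤ) →+ C) = Nat.card C ^ Nat.card ι := by
  rw [← Nat.card_fun, Nat.card_congr Finsupp.liftAddHom.symm.toEquiv]
  exact Nat.card_congr (Equiv.arrowCongr (.refl ι) (zmultiplesHom C).symm)

theorem card_addMonoidHom_zmod_of_fg (Q : Type*) [AddCommGroup Q] [AddGroup.FG Q] {q : ℕ}
    (hq : q ≠ 0) :
    (Nat.card (Q →+ ZMod q) : ℚ) =
      (q : ℚ) ^ finrank ℤ Q * (Nat.card (torsion Q) / Nat.card (nsmulSub q (torsion Q))) := by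
  obtain ⟨n, ι, _, p, hp, e, ⟨f⟩⟩ := equiv_free_prod_directSum_zmod Q
  have (i : ι) : NeZero (p i ^ e i) := ⟨pow_ne_zero _ (hp i).ne_zero⟩
  set D := DirectSum ι fun i => ZMod (p i ^ e i)
  have : Finite D := .of_equiv _ (DirectSum.addEquivProd _).symm.toEquiv
  have hD : IsAddTorsion D := isAddTorsion_of_finite
  let t : torsion Q ≃+ D :=
    (AddSubgroup.equivMapOfInjective _ _ f.injective).trans
      ((AddEquiv.addSubgroupCongr f.map_torsion).trans (torsionProdEquiv _ D hD))
  have hrank : finrank ℤ Q = n := by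
    rw [f.toIntLinearEquiv.finrank_eq, finrank_prod_eq_left_of_isAddTorsion _ _ hD,
      Module.finrank_finsupp_self, Fintype.card_fin]
  have hhom : Nat.card (Q →+ ZMod q) = q ^ n * Nat.card (D →+ ZMod q) := by
    rw [Nat.card_congr f.addMonoidHomCongrLeftEquiv, card_addMonoidHom_prod,
      card_addMonoidHom_finsupp_int, Nat.card_zmod, Nat.card_fin]
  have hqD : (Nat.card (nsmulSub q D) : ℚ) ≠ 0 := Nat.cast_ne_zero.mpr Nat.card_pos.ne'
  rw [hrank, Nat.card_congr t.toEquiv, card_nsmulSub_congr q t, hhom,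
    ← card_addMonoidHom_mul_card_nsmulSub_of_finite D hq, Nat.cast_mul, Nat.cast_mul,
    Nat.cast_pow, mul_div_cancel_right₀ _ hqD]

theorem card_addMonoidHom_pi (Q : Type*) [AddCommGroup Q] {ι : Type*} [Fintype ι]
    (M : ι → Type*) [∀ i, AddCommGroup (M i)] :
    Nat.card (Q →+ ∀ i, M i) = ∏ i, Nat.card (Q →+ M i) := by
  rw [← Nat.card_pi]
  exact Nat.card_congr
    { toFun φ i := (Pi.evalAddMonoidHom M i).comp φ
      invFun := AddMonoidHom.pi
      left_inv _ := rfl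
      right_inv _ := rfl }

theorem card_addMonoidHom_vanishing_eq_quotient {E M : Type*} [AddCommGroup M] (g : E → M)
    (A : Finset E) (H : Type*) [AddCommGroup H] :
    Nat.card {φ : M →+ H // ∀ e ∈ A, φ (g e) = 0} = Nat.card (M ⧸ listSub g A →+ H) := by
  refine Nat.card_congr ((Equiv.subtypeEquivRight fun φ => ?_).trans
    ((QuotientAddGroup.mk' _).liftOfSurjective (QuotientAddGroup.mk'_surjective _)))
  rw [QuotientAddGroup.ker_mk', listSub, AddSubgroup.closure_le, Set.image_subset_iff]
  rfl

theorem card_addMonoidHom_pi_zmod_vanishing {E M ι : Type*} [AddCommGroup M] [AddGroup.FG M]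
    [Fintype ι] (g : E → M) (A : Finset E) (qs : ι → ℕ) (hqs : ∀ i, qs i ≠ 0) :
    (Nat.card {φ : M →+ ∀ i, ZMod (qs i) // ∀ e ∈ A, φ (g e) = 0} : ℚ) =
      ((∏ i, qs i : ℕ) : ℚ) ^ finrank ℤ M * ((∏ i, qs i : ℕ) : ℚ) ^ (-(listRk g A : ℤ)) *
        ∏ i, (listMult g A : ℚ) / Nat.card (nsmulSub (qs i) (listTorsion g A)) := by
  have hq : ((∏ i, qs i : ℕ) : ℚ) ≠ 0 := by simp [Finset.prod_eq_zero_iff, hqs]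
  have hrank : finrank ℤ (M ⧸ listSub g A) + listRk g A = finrank ℤ M :=
    (listSub g A).finrank_quotient_add_finrank
  rw [card_addMonoidHom_vanishing_eq_quotient, card_addMonoidHom_pi, Nat.cast_prod]
  simp_rw [card_addMonoidHom_zmod_of_fg _ (hqs _)]
  rw [Finset.prod_mul_distrib, Finset.prod_pow, ← Nat.cast_prod, ← hrank, ← zpow_natCast,
    ← zpow_natCast, ← zpow_add₀ hq]
  push_cast [add_neg_cancel_right]
  rfl

theorem Finset.sum_prod_one_add_mul_boole {Φ ι R : Type*} [Fintype Φ] [Fintype ι]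
    [CommSemiring R] (p : Φ → ι → Prop) [∀ φ, DecidablePred (p φ)] (v : ι → R) :
    ∑ φ, ∏ e, (1 + v e * if p φ e then 1 else 0) =
      ∑ A : Finset ι, (Nat.card {φ // ∀ e ∈ A, p φ e} : R) * ∏ e ∈ A, v e := by
  simp_rw [Finset.prod_one_add, Finset.powerset_univ, Finset.prod_mul_distrib, Finset.prod_boole]
  rw [Finset.sum_comm]
  refine Finset.sum_congr rfl fun A _ => ?_
  rw [← Finset.mul_sum, mul_comm, Finset.sum_boole, Nat.card_eq_fintype_card,
    Fintype.card_subtype]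

/-- generalized Fortuin–Kasteleyn representation: for a finite list
`(g_e)_{e∈E}` in a finitely generated abelian group `G` and a finite abelian group
`H = ⊕_{i=1}^k ℤ/q_iℤ` of order `q = q_1⋯q_k`,
`Σ_{φ∈Hom(G,H)} Π_{e∈E}(1 + v_e·[φ(g_e)=0])
  = q^{rk(G)} Σ_{A⊆E} q^{-rk(A)} (Π_i m(A)/|q_i G_A|) Π_{e∈A} v_e`. -/
theorem generalized_fortuin_kasteleyn [Fintype α] [AddGroup.FG G]
    (g : α → G) (k : ℕ) (qs : Fin k → ℕ) (hqs : ∀ i, 0 < qs i)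
    [Fintype (G →+ (∀ i, ZMod (qs i)))]
    (v : α → ℚ) :
    ∑ φ : G →+ (∀ i, ZMod (qs i)),
        ∏ e : α, (1 + v e * (if φ (g e) = 0 then 1 else 0)) =
      ((∏ i, qs i : ℕ) : ℚ) ^ (Module.finrank ℤ G) *
        ∑ A : Finset α,
          ((∏ i, qs i : ℕ) : ℚ) ^ (-(listRk g A : ℤ)) *
            (∏ i, (listMult g A : ℚ) /
              (Nat.card (nsmulSub (qs i) (listTorsion g A)) : ℚ)) *
            ∏ e ∈ A, v e := by
  rw [Finset.sum_prod_one_add_mul_boole, Finset.mul_sum]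
  refine Finset.sum_congr rfl fun A _ => ?_
  rw [card_addMonoidHom_pi_zmod_vanishing g A qs fun i => (hqs i).ne']
  ring
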